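/- arXiv:2104.07264 — 4 statements merged into one kernel-verified Lean document; each statement's English description precedes it below -/
import Mathlib

section
/- For ρ > 0, the integral (1/T)∫_{-∞}^{∞} sinc²(z/T)·e^{-2π²L|z|} dz, where sinc(x) = sin(πx)/(πx) and ρ = πLT, equals (2/π)·[arctan(1/ρ) − (ρ/2)·log(1 + 1/ρ²)]. -/
open Real MeasureTheory

/-- The normalized sinc function, `sinc x = sin(πx)/(πx)` with `sinc 0 = 1`. -/
noncomputable def sinc (x : ℝ) : ℝ := if x = 0 then 1 else Real.sin (π * x) / (π * x)

section Aux
open Set Filter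


lemma integrable_exp_neg_abs {a : ℝ} (ha : 0 < a) :
    Integrable (fun z : ℝ => Real.exp (-a * |z|)) := by
  have hIoi : IntegrableOn (fun z : ℝ => Real.exp (-a * |z|)) (Ioi 0) := by
    refine (exp_neg_integrableOn_Ioi 0 ha).congr_fun (fun x hx => ?_) measurableSet_Ioi
    rw [abs_of_pos hx]
  have hIic : IntegrableOn (fun z : ℝ => Real.exp (-a * |z|)) (Iic 0) := by
    rw [← Measure.map_neg_eq_self (volume : Measure ℝ)]
    have m : MeasurableEmbedding fun x : ℝ => -x := (Homeomorph.neg ℝ).measurableEmbedding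
    rw [m.integrableOn_map_iff]
    simp_rw [Function.comp_def, abs_neg, neg_preimage, neg_Iic, neg_zero]
    exact Iff.mpr integrableOn_Ici_iff_integrableOn_Ioi hIoi
  have := hIic.union hIoi
  rwa [Iic_union_Ioi, integrableOn_univ] at this

lemma integral_cos_mul_exp_neg_abs {a : ℝ} (ha : 0 < a) (c : ℝ) :
    ∫ z : ℝ, Real.cos (c * z) * Real.exp (-a * |z|) = 2 * a / (a ^ 2 + c ^ 2) := by
  have hd : (0:ℝ) < a ^ 2 + c ^ 2 := by positivity
  have key : (fun z : ℝ => Real.cos (c * z) * Real.exp (-a * |z|))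
      = fun z : ℝ => (fun t : ℝ => Real.cos (c * t) * Real.exp (-a * t)) |z| := by
    funext z
    rcases abs_cases z with ⟨h, _⟩ | ⟨h, _⟩
    · rw [h]
    · rw [h]; simp [mul_neg, Real.cos_neg]
  rw [key, integral_comp_abs (f := fun t : ℝ => Real.cos (c * t) * Real.exp (-a * t))]
  have hF : ∀ t ∈ Ici (0:ℝ), HasDerivAt
      (fun t : ℝ => Real.exp (-a * t) * (c * Real.sin (c * t) - a * Real.cos (c * t)) / (a ^ 2 + c ^ 2))
      (Real.cos (c * t) * Real.exp (-a * t)) t := by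
    intro t _
    have h1 : HasDerivAt (fun t : ℝ => Real.exp (-a * t)) (Real.exp (-a * t) * (-a)) t := by
      simpa using (HasDerivAt.exp ((hasDerivAt_id t).const_mul (-a)))
    have h2 : HasDerivAt (fun t : ℝ => c * Real.sin (c * t) - a * Real.cos (c * t))
        (c * (Real.cos (c * t) * c) - a * (-Real.sin (c * t) * c)) t := by
      have hs : HasDerivAt (fun t : ℝ => Real.sin (c * t)) (Real.cos (c * t) * c) t := by
        simpa [Function.comp_def] using (Real.hasDerivAt_sin (c * t)).comp t ((hasDerivAt_id t).const_mul c)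
      have hc : HasDerivAt (fun t : ℝ => Real.cos (c * t)) (-Real.sin (c * t) * c) t := by
        simpa [Function.comp_def] using (Real.hasDerivAt_cos (c * t)).comp t ((hasDerivAt_id t).const_mul c)
      exact (hs.const_mul c).sub (hc.const_mul a)
    have := (h1.mul h2).div_const (a ^ 2 + c ^ 2)
    refine this.congr_deriv ?_
    field_simp
    ring
  have hint : IntegrableOn (fun t : ℝ => Real.cos (c * t) * Real.exp (-a * t)) (Ioi 0) := by
    refine (exp_neg_integrableOn_Ioi 0 ha).mono' ?_ ?_
    · exact (Real.continuous_cos.comp (continuous_const.mul continuous_id)).mul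
        (Real.continuous_exp.comp (continuous_const.mul continuous_id)) |>.aestronglyMeasurable
    · filter_upwards with t
      rw [norm_mul, Real.norm_eq_abs, Real.norm_eq_abs, Real.abs_exp]
      nlinarith [abs_cos_le_one (c * t), Real.exp_pos (-a * t), abs_nonneg (Real.cos (c*t))]
  have htend : Tendsto
      (fun t : ℝ => Real.exp (-a * t) * (c * Real.sin (c * t) - a * Real.cos (c * t)) / (a ^ 2 + c ^ 2))
      atTop (nhds 0) := by
    have he : Tendsto (fun t : ℝ => Real.exp (-a * t)) atTop (nhds 0) := by
      apply Real.tendsto_exp_atBot.comp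
      exact (tendsto_const_mul_atBot_of_neg (by linarith)).mpr tendsto_id
    apply squeeze_zero_norm (a := fun t => Real.exp (-a * t) * ((|c| + a) / (a ^ 2 + c ^ 2)))
    · intro t
      rw [norm_div, norm_mul, Real.norm_eq_abs, Real.norm_eq_abs, Real.norm_eq_abs, Real.abs_exp,
        abs_of_pos hd]
      rw [div_le_iff₀ hd, mul_comm (Real.exp (-a*t)) _, mul_assoc, div_mul_cancel₀ _ (ne_of_gt hd)]
      have : |c * Real.sin (c * t) - a * Real.cos (c * t)| ≤ |c| + a := by
        calc |c * Real.sin (c * t) - a * Real.cos (c * t)|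
            ≤ |c * Real.sin (c * t)| + |a * Real.cos (c * t)| := abs_sub _ _
          _ ≤ |c| * 1 + |a| * 1 := by
              rw [abs_mul, abs_mul]
              gcongr
              exacts [abs_sin_le_one _, abs_cos_le_one _]
          _ = |c| + a := by rw [abs_of_pos ha]; ring
      nlinarith [Real.exp_pos (-a * t), abs_nonneg (c * Real.sin (c * t) - a * Real.cos (c * t))]
    · simpa using he.mul_const ((|c| + a) / (a ^ 2 + c ^ 2))
  rw [MeasureTheory.integral_Ioi_of_hasDerivAt_of_tendsto' hF hint htend]
  simp only [mul_zero, Real.cos_zero, Real.sin_zero, neg_zero, Real.exp_zero]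
  field_simp
  ring


lemma sinc_sq_eq_aux (x : ℝ) :
    _root_.sinc x ^ 2 = ∫ f in Ioc (-1:ℝ) 1, (1 - |f|) * Real.cos (2 * π * f * x) := by
  have hcont : Continuous fun f : ℝ => (1 - |f|) * Real.cos (2 * π * f * x) :=
    (continuous_const.sub continuous_abs).mul
      (Real.continuous_cos.comp (by continuity))
  -- convert to interval integral and symmetrize
  have h1 : ∫ f in Ioc (-1:ℝ) 1, (1 - |f|) * Real.cos (2 * π * f * x)
      = ∫ f in (-1:ℝ)..1, (1 - |f|) * Real.cos (2 * π * f * x) := by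
    rw [intervalIntegral.integral_of_le (by norm_num)]
  have hsplit : ∫ f in (-1:ℝ)..1, (1 - |f|) * Real.cos (2 * π * f * x)
      = (∫ f in (-1:ℝ)..0, (1 - |f|) * Real.cos (2 * π * f * x))
        + ∫ f in (0:ℝ)..1, (1 - |f|) * Real.cos (2 * π * f * x) := by
    rw [intervalIntegral.integral_add_adjacent_intervals] <;>
      exact hcont.intervalIntegrable _ _
  have hneg : (∫ f in (-1:ℝ)..0, (1 - |f|) * Real.cos (2 * π * f * x))
      = ∫ f in (0:ℝ)..1, (1 - |f|) * Real.cos (2 * π * f * x) := by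
    have := intervalIntegral.integral_comp_neg (a := (0:ℝ)) (b := 1)
      (fun f : ℝ => (1 - |f|) * Real.cos (2 * π * f * x))
    rw [neg_zero] at this
    rw [← this]
    refine intervalIntegral.integral_congr fun f _ => ?_
    rw [abs_neg, show 2 * π * -f * x = -(2 * π * f * x) by ring, Real.cos_neg]
  have habs : ∫ f in (0:ℝ)..1, (1 - |f|) * Real.cos (2 * π * f * x)
      = ∫ f in (0:ℝ)..1, (1 - f) * Real.cos (2 * π * f * x) := by
    refine intervalIntegral.integral_congr fun f hf => ?_
    rw [uIcc_of_le (by norm_num)] at hf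
    rw [abs_of_nonneg hf.1]
  rw [h1, hsplit, hneg, habs, ← two_mul]
  by_cases hx : x = 0
  · subst hx
    simp only [mul_zero, Real.cos_zero, mul_one, _root_.sinc, if_pos rfl, one_pow]
    rw [intervalIntegral.integral_sub intervalIntegrable_const
      (intervalIntegral.intervalIntegrable_id)]
    simp
    norm_num
  · have hc : (2 * π * x) ≠ 0 := by
      have := Real.pi_ne_zero; positivity
    set c := 2 * π * x with hcdef
    have hF : ∀ f ∈ uIcc (0:ℝ) 1, HasDerivAt
        (fun f : ℝ => (1 - f) * Real.sin (c * f) / c - Real.cos (c * f) / c ^ 2)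
        ((1 - f) * Real.cos (2 * π * f * x)) f := by
      intro f _
      have hs : HasDerivAt (fun f : ℝ => Real.sin (c * f)) (Real.cos (c * f) * c) f := by
        simpa [Function.comp_def] using (Real.hasDerivAt_sin (c * f)).comp f ((hasDerivAt_id f).const_mul c)
      have hcc : HasDerivAt (fun f : ℝ => Real.cos (c * f)) (-Real.sin (c * f) * c) f := by
        simpa [Function.comp_def] using (Real.hasDerivAt_cos (c * f)).comp f ((hasDerivAt_id f).const_mul c)
      have h1f : HasDerivAt (fun f : ℝ => (1 : ℝ) - f) (-1) f := by
        simpa using (hasDerivAt_id f).const_sub 1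
      have := ((h1f.mul hs).div_const c).sub (hcc.div_const (c ^ 2))
      refine this.congr_deriv ?_
      have : Real.cos (2 * π * f * x) = Real.cos (c * f) := by rw [hcdef]; ring_nf
      rw [this]
      field_simp
      ring
    have hIc : Continuous fun f : ℝ => (1 - f) * Real.cos (2 * π * f * x) :=
      (continuous_const.sub continuous_id).mul (Real.continuous_cos.comp (by continuity))
    rw [intervalIntegral.integral_eq_sub_of_hasDerivAt hF (hIc.intervalIntegrable 0 1)]
    simp only [mul_one, mul_zero, Real.cos_zero, Real.sin_zero, sub_zero, sub_self, zero_mul,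
      zero_div]
    -- now: sinc x ^ 2 = 2 * ((0 - cos c / c^2) - (0 - 1 / c^2))
    have hsin : Real.sin (π * x) ^ 2 = (1 - Real.cos c) / 2 := by
      have h2 : Real.cos c = Real.cos (π * x) ^ 2 - Real.sin (π * x) ^ 2 := by
        rw [hcdef, show 2 * π * x = 2 * (π * x) by ring, Real.cos_two_mul']
      nlinarith [Real.sin_sq_add_cos_sq (π * x)]
    rw [_root_.sinc, if_neg hx, div_pow, hsin]
    have hπx : π * x ≠ 0 := by have := Real.pi_ne_zero; exact mul_ne_zero this hx
    field_simp
    ring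

-- symmetrization helper
lemma integral_Ioc_symm {g : ℝ → ℝ} (hg : Continuous g) (hsymm : ∀ f : ℝ, g (-f) = g f) :
    ∫ f in Ioc (-1:ℝ) 1, g f = 2 * ∫ f in (0:ℝ)..1, g f := by
  rw [← intervalIntegral.integral_of_le (by norm_num : (-1:ℝ) ≤ 1),
    ← intervalIntegral.integral_add_adjacent_intervals (a := (-1:ℝ)) (b := 0) (c := 1)
      (hg.intervalIntegrable _ _) (hg.intervalIntegrable _ _)]
  have := intervalIntegral.integral_comp_neg (a := (0:ℝ)) (b := 1) g
  rw [neg_zero] at this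
  simp_rw [hsymm] at this
  rw [← this]
  ring

lemma eval_J {ρ : ℝ} (hρ : 0 < ρ) :
    ∫ f in (0:ℝ)..1, (1 - f) / (ρ ^ 2 + f ^ 2)
      = (1/ρ) * Real.arctan (1/ρ) - Real.log (1 + 1/ρ^2) / 2 := by
  have hρ2 : ∀ f : ℝ, (0:ℝ) < ρ ^ 2 + f ^ 2 := fun f => by positivity
  have hF : ∀ f ∈ uIcc (0:ℝ) 1, HasDerivAt
      (fun f : ℝ => (1/ρ) * Real.arctan (f/ρ) - Real.log (ρ ^ 2 + f ^ 2) / 2)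
      ((1 - f) / (ρ ^ 2 + f ^ 2)) f := by
    intro f _
    have h1 : HasDerivAt (fun f : ℝ => Real.arctan (f/ρ)) ((1/(1+(f/ρ)^2)) * (1/ρ)) f := by
      have := (Real.hasDerivAt_arctan (f/ρ)).comp f ((hasDerivAt_id f).div_const ρ)
      simpa [Function.comp_def] using this
    have h2 : HasDerivAt (fun f : ℝ => Real.log (ρ ^ 2 + f ^ 2)) ((2*f) / (ρ ^ 2 + f ^ 2)) f := by
      have hin : HasDerivAt (fun f : ℝ => ρ ^ 2 + f ^ 2) (2*f) f := by
        simpa using (hasDerivAt_pow 2 f).const_add (ρ ^ 2)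
      have := (Real.hasDerivAt_log (ne_of_gt (hρ2 f))).comp f hin
      simpa [div_eq_inv_mul, mul_comm, Function.comp_def] using this
    have := ((h1.const_mul (1/ρ)).sub (h2.div_const 2))
    refine this.congr_deriv ?_
    have h3 : (1:ℝ) + (f/ρ)^2 > 0 := by positivity
    field_simp
  rw [intervalIntegral.integral_eq_sub_of_hasDerivAt hF]
  · have hlog : Real.log (ρ ^ 2 + 1) - Real.log (ρ ^ 2) = Real.log (1 + 1/ρ^2) := by
      rw [← Real.log_div (by positivity) (by positivity),
        show (ρ ^ 2 + 1) / ρ ^ 2 = 1 + 1 / ρ ^ 2 by field_simp]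
    simp only [zero_div, Real.arctan_zero, mul_zero, zero_pow, add_zero, one_pow, sub_zero]
    rw [← hlog]
    ring_nf
  · apply Continuous.intervalIntegrable
    apply Continuous.div ((continuous_const.sub continuous_id'))
    · continuity
    · exact fun f => ne_of_gt (hρ2 f)

end Aux

open Set Filter in
/-- For `ρ = πLT > 0`, `(1/T)∫ sinc²(z/T)·e^{-2π²L|z|} dz
= (2/π)[arctan(1/ρ) − (ρ/2)log(1 + 1/ρ²)]`. -/
theorem sinc_sq_exponential_integral (L T : ℝ) (hL : 0 < L) (hT : 0 < T) :
    (1 / T) * ∫ z : ℝ, (_root_.sinc (z / T)) ^ 2 * Real.exp (-2 * π ^ 2 * L * |z|)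
      = (2 / π) * (Real.arctan (1 / (π * L * T))
          - (π * L * T / 2) * Real.log (1 + 1 / (π * L * T) ^ 2)) := by
  have hπ := Real.pi_pos
  set a : ℝ := 2 * π ^ 2 * L with hadef
  have ha : 0 < a := by positivity
  set ρ : ℝ := π * L * T with hρdef
  have hρ : 0 < ρ := by positivity
  have h1 : ∀ z : ℝ, _root_.sinc (z / T) ^ 2 * Real.exp (-2 * π ^ 2 * L * |z|)
      = ∫ f in Ioc (-1:ℝ) 1, (1 - |f|) * Real.cos (2 * π * f * (z / T)) * Real.exp (-a * |z|) := by
    intro z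
    rw [show -2 * π ^ 2 * L * |z| = -a * |z| by rw [hadef]; ring, sinc_sq_eq_aux (z / T),
      ← integral_mul_const]
  rw [show (∫ z : ℝ, _root_.sinc (z / T) ^ 2 * Real.exp (-2 * π ^ 2 * L * |z|))
      = ∫ z : ℝ, ∫ f in Ioc (-1:ℝ) 1,
          (1 - |f|) * Real.cos (2 * π * f * (z / T)) * Real.exp (-a * |z|) from
    integral_congr_ae (Eventually.of_forall h1)]
  -- Fubini
  have hcont : Continuous (Function.uncurry fun (z : ℝ) (f : ℝ) =>
      (1 - |f|) * Real.cos (2 * π * f * (z / T)) * Real.exp (-a * |z|)) := by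
    apply Continuous.mul
    · apply Continuous.mul
      · exact (continuous_const.sub (continuous_abs.comp continuous_snd))
      · exact Real.continuous_cos.comp (by fun_prop)
    · exact Real.continuous_exp.comp (continuous_const.mul (continuous_abs.comp continuous_fst))
  have hmeas : AEStronglyMeasurable (Function.uncurry fun (z : ℝ) (f : ℝ) =>
      (1 - |f|) * Real.cos (2 * π * f * (z / T)) * Real.exp (-a * |z|))
      (volume.prod (volume.restrict (Ioc (-1:ℝ) 1))) := hcont.aestronglyMeasurable
  have hbound : ∀ z : ℝ, ∀ f ∈ Ioc (-1:ℝ) 1,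
      ‖(1 - |f|) * Real.cos (2 * π * f * (z / T)) * Real.exp (-a * |z|)‖
        ≤ Real.exp (-a * |z|) := by
    intro z f hf
    rw [norm_mul, norm_mul, Real.norm_eq_abs, Real.norm_eq_abs, Real.norm_eq_abs, Real.abs_exp]
    have h0 : 0 ≤ 1 - |f| := by
      rcases hf with ⟨h1f, h2f⟩
      have : |f| ≤ 1 := abs_le.mpr ⟨le_of_lt h1f, h2f⟩
      linarith
    have h01 : abs (1 - abs f) ≤ 1 := by rw [abs_of_nonneg h0]; linarith [abs_nonneg f]
    have hcos1 := abs_cos_le_one (2 * π * f * (z / T))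
    have hprod : abs (1 - abs f) * |Real.cos (2 * π * f * (z / T))| ≤ 1 * 1 :=
      mul_le_mul h01 hcos1 (abs_nonneg _) (by norm_num)
    nlinarith [Real.exp_pos (-a * |z|)]
  have hInt : Integrable (Function.uncurry fun (z : ℝ) (f : ℝ) =>
      (1 - |f|) * Real.cos (2 * π * f * (z / T)) * Real.exp (-a * |z|))
      (volume.prod (volume.restrict (Ioc (-1:ℝ) 1))) := by
    rw [integrable_prod_iff hmeas]
    constructor
    · filter_upwards with z
      exact (Continuous.integrableOn_Ioc (by
        have := hcont.comp (Continuous.prodMk_right z)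
        exact this))
    · apply Integrable.mono' ((integrable_exp_neg_abs ha).const_mul 2)
      · exact (hmeas.norm.integral_prod_right')
      · filter_upwards with z
        rw [Real.norm_eq_abs, abs_of_nonneg (integral_nonneg fun f => norm_nonneg _)]
        calc ∫ f in Ioc (-1:ℝ) 1,
              ‖(1 - |f|) * Real.cos (2 * π * f * (z / T)) * Real.exp (-a * |z|)‖
            ≤ ∫ _f in Ioc (-1:ℝ) 1, Real.exp (-a * |z|) := by
              apply setIntegral_mono_on
              · exact ((hcont.comp (Continuous.prodMk_right z)).integrableOn_Ioc).norm
              · exact integrableOn_const (by rw [Real.volume_Ioc]; norm_num)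
              · exact measurableSet_Ioc
              · exact hbound z
          _ = 2 * Real.exp (-a * |z|) := by
              rw [setIntegral_const, Real.volume_real_Ioc, smul_eq_mul]
              norm_num
  rw [MeasureTheory.integral_integral_swap hInt]
  -- inner z-integral
  have h3 : ∀ f : ℝ, (∫ z : ℝ, (1 - |f|) * Real.cos (2 * π * f * (z / T)) * Real.exp (-a * |z|))
      = L * T ^ 2 * ((1 - |f|) / (ρ ^ 2 + f ^ 2)) := by
    intro f
    have hcos : ∀ z : ℝ, (1 - |f|) * Real.cos (2 * π * f * (z / T)) * Real.exp (-a * |z|)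
        = (1 - |f|) * (Real.cos ((2 * π * f / T) * z) * Real.exp (-a * |z|)) := by
      intro z
      rw [mul_assoc, show 2 * π * f * (z / T) = (2 * π * f / T) * z by ring]
    simp_rw [hcos]
    rw [integral_const_mul, integral_cos_mul_exp_neg_abs ha (2 * π * f / T)]
    have hden : a ^ 2 + (2 * π * f / T) ^ 2 = (4 * π ^ 2 / T ^ 2) * (ρ ^ 2 + f ^ 2) := by
      rw [hadef, hρdef]; field_simp; ring
    rw [hden, hadef]
    have h1 : (0:ℝ) < ρ ^ 2 + f ^ 2 := by positivity
    field_simp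
    ring
  rw [integral_congr_ae (Eventually.of_forall fun f => h3 f)]
  rw [integral_const_mul]
  rw [integral_Ioc_symm (by
      apply Continuous.div (continuous_const.sub continuous_abs)
      · continuity
      · exact fun f => by positivity)
    (fun f => by rw [abs_neg, neg_pow]; ring_nf)]
  have habs : ∫ f in (0:ℝ)..1, (1 - |f|) / (ρ ^ 2 + f ^ 2)
      = ∫ f in (0:ℝ)..1, (1 - f) / (ρ ^ 2 + f ^ 2) := by
    refine intervalIntegral.integral_congr fun f hf => ?_
    rw [uIcc_of_le (by norm_num)] at hf
    rw [abs_of_nonneg hf.1]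
  rw [habs, eval_J hρ, hρdef]
  have hπ0 : π ≠ 0 := ne_of_gt hπ
  field_simp
end

section
/- For ρ > 0, define η(ρ) = 1 + (2/π)·[(ρ/2)·log(1 + 1/ρ²) − arctan(1/ρ)]. Then 0 < η(ρ) < 1 for all ρ > 0, lim_{ρ→0⁺} η(ρ) = 0, and lim_{ρ→∞} η(ρ) = 1. -/
open Real Filter Topology

open Asymptotics

lemma log_lt_arctan {t : ℝ} (ht : 0 < t) :
    Real.log (1 + t ^ 2) < 2 * t * Real.arctan t := by
  set g : ℝ → ℝ := fun x => 2 * x * Real.arctan x - Real.log (1 + x ^ 2) with hg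
  have hne : ∀ x : ℝ, 1 + x ^ 2 ≠ 0 := fun x => by positivity
  have hd : ∀ x : ℝ, HasDerivAt g (2 * Real.arctan x) x := by
    intro x
    have h1 : HasDerivAt (fun x : ℝ => 2 * x) 2 x := by
      simpa using (hasDerivAt_id x).const_mul (2:ℝ)
    have h2 := Real.hasDerivAt_arctan x
    have h3 : HasDerivAt (fun x : ℝ => 1 + x ^ 2) (2 * x) x := by
      simpa using (hasDerivAt_pow 2 x).const_add 1
    have h4 := (h3.log (hne x))
    have : HasDerivAt (fun y => 2 * y * Real.arctan y - Real.log (1 + y ^ 2))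
        (2 * Real.arctan x + 2 * x * (1 / (1 + x ^ 2)) - 2 * x / (1 + x ^ 2)) x :=
      (h1.mul h2).sub h4
    convert this using 1
    ring
  have hmono : StrictMonoOn g (Set.Ici 0) := by
    apply strictMonoOn_of_deriv_pos (convex_Ici 0)
    · exact (continuous_iff_continuousAt.2 fun x => (hd x).continuousAt).continuousOn
    · intro x hx
      rw [interior_Ici] at hx
      rw [(hd x).deriv]
      have : Real.arctan 0 < Real.arctan x := Real.arctan_strictMono hx
      rw [Real.arctan_zero] at this
      linarith
  have h0 : g 0 = 0 := by simp [hg]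
  have := hmono (Set.self_mem_Ici) (Set.mem_Ici.2 ht.le) ht
  rw [h0] at this
  simp only [hg] at this
  linarith

lemma logdiv_atTop : Tendsto (fun t : ℝ => Real.log (1 + t ^ 2) / t) atTop (𝓝 0) := by
  have h1 : (fun x : ℝ => Real.log x) =o[atTop] fun x : ℝ => x ^ ((1:ℝ)/2) :=
    isLittleO_log_rpow_atTop (by norm_num)
  have htend : Tendsto (fun t : ℝ => 1 + t ^ 2) atTop atTop := by
    apply tendsto_atTop_add_const_left
    exact tendsto_pow_atTop (by norm_num)
  have h2 : (fun t : ℝ => Real.log (1 + t ^ 2)) =o[atTop]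
      fun t : ℝ => (1 + t ^ 2) ^ ((1:ℝ)/2) := h1.comp_tendsto htend
  have h3 : (fun t : ℝ => (1 + t ^ 2) ^ ((1:ℝ)/2)) =O[atTop] fun t : ℝ => t := by
    apply IsBigO.of_bound 2
    filter_upwards [eventually_ge_atTop (1:ℝ)] with t ht
    have ht0 : (0:ℝ) ≤ t := by linarith
    have hle : (1 + t ^ 2 : ℝ) ≤ (2 * t) ^ 2 := by nlinarith
    have : (1 + t ^ 2 : ℝ) ^ ((1:ℝ)/2) = Real.sqrt (1 + t ^ 2) := by
      rw [Real.sqrt_eq_rpow]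
    rw [this]
    have h4 : Real.sqrt (1 + t ^ 2) ≤ Real.sqrt ((2 * t) ^ 2) := Real.sqrt_le_sqrt hle
    rw [Real.sqrt_sq (by linarith)] at h4
    rw [Real.norm_eq_abs, Real.norm_eq_abs, abs_of_nonneg (Real.sqrt_nonneg _),
      abs_of_nonneg ht0]
    linarith
  exact (h2.trans_isBigO h3).tendsto_div_nhds_zero

lemma mul_log_zero : Tendsto (fun ρ : ℝ => (ρ/2) * Real.log (1 + 1/ρ^2)) (𝓝[>] (0:ℝ)) (𝓝 0) := by
  have hcomp : Tendsto (fun ρ : ℝ => Real.log (1 + (ρ⁻¹) ^ 2) / ρ⁻¹) (𝓝[>] (0:ℝ)) (𝓝 0) :=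
    logdiv_atTop.comp tendsto_inv_nhdsGT_zero
  have : Tendsto (fun ρ : ℝ => ρ * Real.log (1 + 1/ρ^2)) (𝓝[>] (0:ℝ)) (𝓝 0) := by
    apply hcomp.congr'
    filter_upwards [self_mem_nhdsWithin] with ρ (hρ : 0 < ρ)
    field_simp
  have h2 := this.div_const 2
  simp only [zero_div] at h2
  apply h2.congr
  intro ρ; ring

lemma mul_log_atTop : Tendsto (fun ρ : ℝ => (ρ/2) * Real.log (1 + 1/ρ^2)) atTop (𝓝 0) := by
  apply squeeze_zero' (g := fun ρ : ℝ => 1/(2*ρ))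
  · filter_upwards [eventually_gt_atTop (0:ℝ)] with (ρ : ℝ) (hρ : (0:ℝ) < ρ)
    have h0 : (0:ℝ) ≤ Real.log (1 + 1/ρ^2) := Real.log_nonneg (le_add_of_nonneg_right (by positivity))
    exact mul_nonneg (by positivity) h0
  · filter_upwards [eventually_gt_atTop (0:ℝ)] with ρ hρ
    have h1 : Real.log (1 + 1/ρ^2) ≤ 1/ρ^2 := by
      have := Real.log_le_sub_one_of_pos (x := 1 + 1/ρ^2) (by positivity)
      linarith
    have h2 : (ρ/2) * Real.log (1 + 1/ρ^2) ≤ (ρ/2) * (1/ρ^2) := by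
      apply mul_le_mul_of_nonneg_left h1 (by positivity)
    have h3 : (ρ/2) * (1/ρ^2) = 1/(2*ρ) := by field_simp
    linarith
  · have h2ρ : Tendsto (fun ρ : ℝ => 2 * ρ) atTop atTop :=
      tendsto_id.const_mul_atTop (by norm_num : (0:ℝ) < 2)
    have := h2ρ.inv_tendsto_atTop
    apply this.congr
    intro ρ
    simp [one_div]

/-- Properties of the mean-square error `η(ρ) = 1 + (2/π)[(ρ/2)log(1+1/ρ²) − arctan(1/ρ)]`:
`0 < η(ρ) < 1` for all `ρ > 0`, `η(ρ) → 0` as `ρ → 0⁺`, and `η(ρ) → 1` as `ρ → ∞`. -/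
theorem eta_properties :
    (∀ ρ : ℝ, 0 < ρ →
      0 < 1 + (2 / π) * ((ρ / 2) * Real.log (1 + 1 / ρ ^ 2) - Real.arctan (1 / ρ)) ∧
      1 + (2 / π) * ((ρ / 2) * Real.log (1 + 1 / ρ ^ 2) - Real.arctan (1 / ρ)) < 1) ∧
    Tendsto (fun ρ : ℝ =>
        1 + (2 / π) * ((ρ / 2) * Real.log (1 + 1 / ρ ^ 2) - Real.arctan (1 / ρ)))
      (nhdsWithin 0 (Set.Ioi 0)) (nhds 0) ∧
    Tendsto (fun ρ : ℝ =>
        1 + (2 / π) * ((ρ / 2) * Real.log (1 + 1 / ρ ^ 2) - Real.arctan (1 / ρ)))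
      atTop (nhds 1) := by
  have hπ : (0:ℝ) < π := Real.pi_pos
  refine ⟨fun ρ hρ => ?_, ?_, ?_⟩
  · have ht : (0:ℝ) < 1/ρ := by positivity
    have hkey := log_lt_arctan ht
    have hsq : (1/ρ)^2 = 1/ρ^2 := by rw [div_pow, one_pow]
    rw [hsq] at hkey
    -- hkey : log (1 + 1/ρ^2) < 2 * (1/ρ) * arctan (1/ρ)
    have hlt : (ρ/2) * Real.log (1 + 1/ρ^2) < Real.arctan (1/ρ) := by
      have := mul_lt_mul_of_pos_left hkey (by positivity : (0:ℝ) < ρ/2)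
      have heq : (ρ/2) * (2 * (1/ρ) * Real.arctan (1/ρ)) = Real.arctan (1/ρ) := by
        field_simp
      linarith [heq ▸ this]
    have hlog0 : (0:ℝ) ≤ Real.log (1 + 1/ρ^2) :=
      Real.log_nonneg (le_add_of_nonneg_right (by positivity))
    have hlog0' : (0:ℝ) ≤ (ρ/2) * Real.log (1 + 1/ρ^2) := mul_nonneg (by positivity) hlog0
    have harctan : Real.arctan (1/ρ) < π/2 := Real.arctan_lt_pi_div_two _
    constructor
    · have hgt : -(π/2) < (ρ/2) * Real.log (1 + 1/ρ^2) - Real.arctan (1/ρ) := by linarith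
      have h2π : (0:ℝ) < 2/π := by positivity
      have hone : (2/π) * (-(π/2)) = -1 := by
        field_simp
      have := mul_lt_mul_of_pos_left hgt h2π
      rw [hone] at this
      linarith
    · have hneg : (ρ/2) * Real.log (1 + 1/ρ^2) - Real.arctan (1/ρ) < 0 := by linarith
      nlinarith [mul_neg_of_pos_of_neg (show (0:ℝ) < 2/π by positivity) hneg]
  · have harctan : Tendsto (fun ρ : ℝ => Real.arctan (1/ρ)) (𝓝[>] (0:ℝ)) (𝓝 (π/2)) := by
      have h1 : Tendsto (fun ρ : ℝ => (1:ℝ)/ρ) (𝓝[>] (0:ℝ)) atTop := by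
        simpa [one_div] using tendsto_inv_nhdsGT_zero (𝕜 := ℝ)
      exact (Real.tendsto_arctan_atTop.mono_right nhdsWithin_le_nhds).comp h1
    have h := ((mul_log_zero.sub harctan).const_mul (2/π)).const_add (1:ℝ)
    convert h using 2
    rw [zero_sub]
    field_simp
    ring
  · have harctan : Tendsto (fun ρ : ℝ => Real.arctan (1/ρ)) atTop (𝓝 0) := by
      have h1 : Tendsto (fun ρ : ℝ => (1:ℝ)/ρ) atTop (𝓝 0) := by
        simpa [one_div] using tendsto_inv_atTop_zero (𝕜 := ℝ)
      have := (Real.continuous_arctan.tendsto 0).comp h1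
      simpa [Function.comp_def] using this
    have h := ((mul_log_atTop.sub harctan).const_mul (2/π)).const_add (1:ℝ)
    convert h using 2
    simp
end

section
/- For σ > 0, define SIR(σ) = [arctan(4π/σ²)(1 − σ⁴/(16π²)) − (σ²/(4π))log(1 + 16π²/σ⁴) + σ²/(4π)] / [(σ⁴/(16π²))arctan(4π/σ²) + (σ²/(8π))log(1 + 16π²/σ⁴) − σ²/(4π)]. Then SIR(σ) → ∞ as σ → 0⁺, SIR is decreasing for small σ, and SIR(0.1) > 10^{2.5} (i.e., SIR exceeds 25 dB when σ < 0.1). -/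
open Real Filter Topology

/-- The signal-to-interference ratio under Wiener phase noise with phase-increment
standard deviation `σ`. -/
noncomputable def SIR (σ : ℝ) : ℝ :=
  (Real.arctan (4 * π / σ ^ 2) * (1 - σ ^ 4 / (16 * π ^ 2))
    - (σ ^ 2 / (4 * π)) * Real.log (1 + 16 * π ^ 2 / σ ^ 4) + σ ^ 2 / (4 * π))
  / ((σ ^ 4 / (16 * π ^ 2)) * Real.arctan (4 * π / σ ^ 2)
    + (σ ^ 2 / (8 * π)) * Real.log (1 + 16 * π ^ 2 / σ ^ 4) - σ ^ 2 / (4 * π))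


noncomputable def Nf (σ : ℝ) : ℝ :=
  Real.arctan (4 * π / σ ^ 2) * (1 - σ ^ 4 / (16 * π ^ 2))
    - (σ ^ 2 / (4 * π)) * Real.log (1 + 16 * π ^ 2 / σ ^ 4) + σ ^ 2 / (4 * π)

noncomputable def Df (σ : ℝ) : ℝ :=
  (σ ^ 4 / (16 * π ^ 2)) * Real.arctan (4 * π / σ ^ 2)
    + (σ ^ 2 / (8 * π)) * Real.log (1 + 16 * π ^ 2 / σ ^ 4) - σ ^ 2 / (4 * π)

lemma arctan_le_self' {x : ℝ} (hx : 0 ≤ x) : Real.arctan x ≤ x := by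
  have h0 : 0 ≤ Real.arctan x := by
    rw [← Real.arctan_zero]; exact Real.arctan_strictMono.monotone hx
  calc Real.arctan x ≤ Real.tan (Real.arctan x) :=
        Real.le_tan h0 (Real.arctan_lt_pi_div_two x)
    _ = x := Real.tan_arctan x

lemma arctan_pos' {x : ℝ} (hx : 0 < x) : 0 < Real.arctan x := by
  rw [← Real.arctan_zero]; exact Real.arctan_strictMono hx

lemma log_ub {σ : ℝ} (h0 : 0 < σ) (h1 : σ ≤ 1) :
    Real.log (1 + 16 * π ^ 2 / σ ^ 4) ≤ 16 / σ := by
  have hs4 : (0:ℝ) < σ ^ 4 := by positivity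
  have hπ : π < 3.15 := by linarith [Real.pi_lt_d2]
  have hπ0 := Real.pi_pos
  have hs41 : σ ^ 4 ≤ 1 := pow_le_one₀ h0.le h1
  have harg : 1 + 16 * π ^ 2 / σ ^ 4 ≤ (4 / σ) ^ 4 := by
    rw [div_pow]
    have h256 : σ ^ 4 + 16 * π ^ 2 ≤ (4:ℝ) ^ 4 := by nlinarith
    have heq : 1 + 16 * π ^ 2 / σ ^ 4 = (σ ^ 4 + 16 * π ^ 2) / σ ^ 4 := by field_simp
    rw [heq]
    gcongr
  have hpos : (0:ℝ) < 1 + 16 * π ^ 2 / σ ^ 4 := by positivity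
  calc Real.log (1 + 16 * π ^ 2 / σ ^ 4) ≤ Real.log ((4 / σ) ^ 4) :=
        Real.log_le_log hpos harg
    _ = 4 * Real.log (4 / σ) := by rw [Real.log_pow]; norm_num
    _ ≤ 4 * (4 / σ - 1) := by
        have := Real.log_le_sub_one_of_pos (show (0:ℝ) < 4 / σ by positivity)
        linarith
    _ ≤ 16 / σ := by
        have h4 : (0:ℝ) < 4 / σ := by positivity
        have : 4 * (4 / σ) = 16 / σ := by ring
        linarith

lemma log_lb {σ : ℝ} (h0 : 0 < σ) (h1 : σ ≤ 1) :
    4 < Real.log (1 + 16 * π ^ 2 / σ ^ 4) := by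
  have hs4 : (0:ℝ) < σ ^ 4 := by positivity
  have hs41 : σ ^ 4 ≤ 1 := pow_le_one₀ h0.le h1
  have hπ : 3.14 < π := by linarith [Real.pi_gt_d2]
  have hpos : (0:ℝ) < 1 + 16 * π ^ 2 / σ ^ 4 := by positivity
  rw [Real.lt_log_iff_exp_lt hpos]
  have hexp : Real.exp 4 < 55 := by
    have h1' : Real.exp 1 < 2.7182818286 := Real.exp_one_lt_d9
    have h4 : Real.exp 4 = (Real.exp 1) ^ (4:ℕ) := by
      rw [← Real.exp_nat_mul]; norm_num
    rw [h4]
    calc (Real.exp 1) ^ (4:ℕ) < 2.7182818286 ^ (4:ℕ) := by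
          exact pow_lt_pow_left₀ h1' (Real.exp_pos 1).le (by norm_num)
      _ < 55 := by norm_num
  have hge : (157:ℝ) < 16 * π ^ 2 / σ ^ 4 := by
    have : 16 * π ^ 2 ≤ 16 * π ^ 2 / σ ^ 4 := by
      rw [le_div_iff₀ hs4]; nlinarith [Real.pi_pos]
    nlinarith
  linarith

lemma log_pos' {σ : ℝ} (h0 : 0 < σ) : 0 ≤ Real.log (1 + 16 * π ^ 2 / σ ^ 4) := by
  apply Real.log_nonneg
  have : (0:ℝ) ≤ 16 * π ^ 2 / σ ^ 4 := by positivity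
  linarith

section deriv
variable {σ : ℝ} (hσ : 0 < σ)

lemma hasDerivAt_inner (hσ : 0 < σ) :
    HasDerivAt (fun s : ℝ => 4 * π / s ^ 2) (-(8 * π * σ) / (σ ^ 2) ^ 2) σ := by
  have h := (hasDerivAt_const σ (4 * π)).div (hasDerivAt_pow 2 σ)
    (pow_ne_zero 2 hσ.ne')
  refine h.congr_deriv ?_
  symm
  push_cast
  ring

lemma hasDerivAt_arct (hσ : 0 < σ) :
    HasDerivAt (fun s : ℝ => Real.arctan (4 * π / s ^ 2))
      (-(8 * π * σ) / (σ ^ 4 + 16 * π ^ 2)) σ := by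
  have h := (Real.hasDerivAt_arctan (4 * π / σ ^ 2)).comp σ (hasDerivAt_inner hσ)
  refine h.congr_deriv ?_
  symm
  have h2 : (σ:ℝ) ^ 2 ≠ 0 := pow_ne_zero 2 hσ.ne'
  field_simp
  ring

lemma hasDerivAt_linner (hσ : 0 < σ) :
    HasDerivAt (fun s : ℝ => 1 + 16 * π ^ 2 / s ^ 4)
      (-(64 * π ^ 2 * σ ^ 3) / (σ ^ 4) ^ 2) σ := by
  have h := ((hasDerivAt_const σ (16 * π ^ 2)).div (hasDerivAt_pow 4 σ)
    (pow_ne_zero 4 hσ.ne')).const_add 1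
  refine h.congr_deriv ?_
  symm
  push_cast
  ring

lemma hasDerivAt_lg (hσ : 0 < σ) :
    HasDerivAt (fun s : ℝ => Real.log (1 + 16 * π ^ 2 / s ^ 4))
      (-(64 * π ^ 2) / (σ * (σ ^ 4 + 16 * π ^ 2))) σ := by
  have hpos : (0:ℝ) < 1 + 16 * π ^ 2 / σ ^ 4 := by positivity
  have h := (hasDerivAt_linner hσ).log hpos.ne'
  refine h.congr_deriv ?_
  symm
  have h4 : (σ:ℝ) ^ 4 ≠ 0 := pow_ne_zero 4 hσ.ne'
  field_simp

lemma hasDerivAt_Nf (hσ : 0 < σ) :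
    HasDerivAt Nf
      (σ / π - (σ ^ 3 / (4 * π ^ 2)) * Real.arctan (4 * π / σ ^ 2)
        - (σ / (2 * π)) * Real.log (1 + 16 * π ^ 2 / σ ^ 4)) σ := by
  have hπ := Real.pi_pos
  have hT1 := (hasDerivAt_arct hσ).mul
    (((hasDerivAt_pow 4 σ).div_const (16 * π ^ 2)).const_sub 1)
  have hT2 := ((hasDerivAt_pow 2 σ).div_const (4 * π)).mul (hasDerivAt_lg hσ)
  have hT3 := (hasDerivAt_pow 2 σ).div_const (4 * π)
  have h := (hT1.sub hT2).add hT3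
  refine h.congr_deriv ?_
  symm
  have hden : σ ^ 4 + 16 * π ^ 2 ≠ 0 := by positivity
  push_cast
  field_simp
  ring

lemma hasDerivAt_Df (hσ : 0 < σ) :
    HasDerivAt Df
      ((σ ^ 3 / (4 * π ^ 2)) * Real.arctan (4 * π / σ ^ 2)
        + (σ / (4 * π)) * Real.log (1 + 16 * π ^ 2 / σ ^ 4) - σ / π) σ := by
  have hπ := Real.pi_pos
  have hT1 := ((hasDerivAt_pow 4 σ).div_const (16 * π ^ 2)).mul (hasDerivAt_arct hσ)
  have hT2 := ((hasDerivAt_pow 2 σ).div_const (8 * π)).mul (hasDerivAt_lg hσ)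
  have hT3 := (hasDerivAt_pow 2 σ).div_const (4 * π)
  have h := (hT1.add hT2).sub hT3
  refine h.congr_deriv ?_
  symm
  have hden : σ ^ 4 + 16 * π ^ 2 ≠ 0 := by positivity
  push_cast
  field_simp
  ring

end deriv

lemma SIR_eq (σ : ℝ) : SIR σ = Nf σ / Df σ := rfl

lemma Df_pos {σ : ℝ} (h0 : 0 < σ) (h1 : σ ≤ 1) : 0 < Df σ := by
  have hπ := Real.pi_pos
  have hA : 0 < Real.arctan (4 * π / σ ^ 2) := arctan_pos' (by positivity)
  have hL := log_lb h0 h1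
  have hc1 : 0 < σ ^ 4 / (16 * π ^ 2) := by positivity
  have hc2 : 0 < σ ^ 2 / (8 * π) := by positivity
  have h2 : σ ^ 2 / (8 * π) * 4 - σ ^ 2 / (4 * π) = σ ^ 2 / (8 * π) * 2 := by ring
  have h3 : σ ^ 2 / (8 * π) * 4 < σ ^ 2 / (8 * π) * Real.log (1 + 16 * π ^ 2 / σ ^ 4) := by
    exact mul_lt_mul_of_pos_left hL hc2
  have h4 : 0 < σ ^ 4 / (16 * π ^ 2) * Real.arctan (4 * π / σ ^ 2) := mul_pos hc1 hA
  unfold Df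
  nlinarith

lemma Nf_pos {σ : ℝ} (h0 : 0 < σ) (h1 : σ ≤ 1/2) : 0 < Nf σ := by
  have hπ := Real.pi_pos
  have hπ3 : 3.14 < π := by linarith [Real.pi_gt_d2]
  have hπ4 : π < 3.15 := by linarith [Real.pi_lt_d2]
  have h1' : σ ≤ 1 := by linarith
  -- arctan lower bound
  have harg : (1:ℝ) ≤ 4 * π / σ ^ 2 := by
    rw [le_div_iff₀ (by positivity)]
    nlinarith
  have hA : π / 4 ≤ Real.arctan (4 * π / σ ^ 2) := by
    calc π / 4 = Real.arctan 1 := Real.arctan_one.symm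
      _ ≤ _ := Real.arctan_strictMono.monotone harg
  have hA' : 0 < Real.arctan (4 * π / σ ^ 2) := arctan_pos' (by positivity)
  -- factor bound
  have hc : σ ^ 4 / (16 * π ^ 2) ≤ 1 / 16 := by
    rw [div_le_div_iff₀ (by positivity) (by norm_num)]
    nlinarith [(pow_le_one₀ h0.le h1' : σ ^ 4 ≤ 1)]
  -- log term bound
  have hlog := log_ub h0 h1'
  have hlog0 := log_pos' h0
  have hlt : σ ^ 2 / (4 * π) * Real.log (1 + 16 * π ^ 2 / σ ^ 4) ≤ 4 * σ / π := by
    have h2 : σ ^ 2 / (4 * π) * Real.log (1 + 16 * π ^ 2 / σ ^ 4)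
        ≤ σ ^ 2 / (4 * π) * (16 / σ) := by
      exact mul_le_mul_of_nonneg_left hlog (by positivity)
    have h3 : σ ^ 2 / (4 * π) * (16 / σ) = 4 * σ / π := by field_simp; ring
    linarith
  have hσπ : 4 * σ / π ≤ 2 / π := by
    rw [div_le_div_iff₀ hπ hπ]; nlinarith
  have hfac : Real.arctan (4 * π / σ ^ 2) * (1 - σ ^ 4 / (16 * π ^ 2))
      ≥ π / 4 * (15 / 16) := by
    have : (15:ℝ)/16 ≤ 1 - σ ^ 4 / (16 * π ^ 2) := by linarith
    nlinarith
  have h2π : 2 / π < 0.67 := by rw [div_lt_iff₀ hπ]; nlinarith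
  have hsq : 0 < σ ^ 2 / (4 * π) := by positivity
  unfold Nf
  nlinarith

lemma Df'_pos {σ : ℝ} (h0 : 0 < σ) (h1 : σ ≤ 1) :
    0 < (σ ^ 3 / (4 * π ^ 2)) * Real.arctan (4 * π / σ ^ 2)
        + (σ / (4 * π)) * Real.log (1 + 16 * π ^ 2 / σ ^ 4) - σ / π := by
  have hπ := Real.pi_pos
  have hA : 0 < Real.arctan (4 * π / σ ^ 2) := arctan_pos' (by positivity)
  have hL := log_lb h0 h1
  have hc1 : 0 < σ ^ 3 / (4 * π ^ 2) := by positivity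
  have hc2 : 0 < σ / (4 * π) := by positivity
  have h3 : σ / (4 * π) * 4 < σ / (4 * π) * Real.log (1 + 16 * π ^ 2 / σ ^ 4) :=
    mul_lt_mul_of_pos_left hL hc2
  have h4 : σ / (4 * π) * 4 = σ / π := by ring
  nlinarith [mul_pos hc1 hA]

lemma deriv_SIR_neg {σ : ℝ} (h0 : 0 < σ) (h1 : σ < 1/2) : deriv SIR σ < 0 := by
  have hπ := Real.pi_pos
  have hD := Df_pos h0 (by linarith)
  have hN := Nf_pos h0 h1.le
  have hD' := Df'_pos h0 (by linarith)
  have hL0 := log_pos' h0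
  set A := Real.arctan (4 * π / σ ^ 2)
  set L := Real.log (1 + 16 * π ^ 2 / σ ^ 4)
  set N' := σ / π - (σ ^ 3 / (4 * π ^ 2)) * A - (σ / (2 * π)) * L with hN'def
  set D' := (σ ^ 3 / (4 * π ^ 2)) * A + (σ / (4 * π)) * L - σ / π with hD'def
  have hkey : N' = -D' - (σ / (4 * π)) * L := by rw [hN'def, hD'def]; ring
  have hder : HasDerivAt SIR ((N' * Df σ - Nf σ * D') / (Df σ) ^ 2) σ := by
    have := (hasDerivAt_Nf h0).div (hasDerivAt_Df h0) hD.ne'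
    exact this
  clear_value N' D'
  clear hN'def hD'def
  rw [hder.deriv]
  apply div_neg_of_neg_of_pos _ (by positivity)
  rw [hkey]
  have hLD : 0 ≤ (σ / (4 * π)) * L * Df σ := by
    apply mul_nonneg (mul_nonneg (by positivity) hL0) hD.le
  nlinarith [mul_pos hD' hD, mul_pos hD' hN, hLD]

lemma strictAnti_SIR : StrictAntiOn SIR (Set.Ioo 0 (1/2)) := by
  apply strictAntiOn_of_deriv_neg (convex_Ioo 0 (1/2))
  · intro x hx
    have h0 : 0 < x := hx.1
    have hD := Df_pos h0 (by linarith [hx.2])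
    have : HasDerivAt SIR _ x := (hasDerivAt_Nf h0).div (hasDerivAt_Df h0) hD.ne'
    exact this.continuousAt.continuousWithinAt
  · rw [interior_Ioo]
    intro x hx
    exact deriv_SIR_neg hx.1 hx.2

section tendsto
open Real Filter Topology Set

lemma sq_tendsto : Tendsto (fun σ : ℝ => σ ^ 2) (𝓝[>] 0) (𝓝[>] 0) := by
  apply tendsto_nhdsWithin_of_tendsto_nhds_of_eventually_within
  · have : Tendsto (fun σ : ℝ => σ ^ 2) (𝓝 0) (𝓝 0) := by
      simpa using (continuous_pow 2).tendsto (0:ℝ)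
    exact this.mono_left nhdsWithin_le_nhds
  · filter_upwards [self_mem_nhdsWithin] with x hx
    exact pow_pos (Set.mem_Ioi.mp hx) 2

lemma arctan_tendsto :
    Tendsto (fun σ : ℝ => Real.arctan (4 * π / σ ^ 2)) (𝓝[>] 0) (𝓝 (π / 2)) := by
  have h2 : Tendsto (fun σ : ℝ => 4 * π / σ ^ 2) (𝓝[>] 0) atTop := by
    simp only [div_eq_mul_inv]
    exact (tendsto_inv_nhdsGT_zero.comp sq_tendsto).const_mul_atTop
      (by positivity : (0:ℝ) < 4 * π)
  exact (Real.tendsto_arctan_atTop.mono_right nhdsWithin_le_nhds).comp h2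

lemma ev_Ioc : ∀ᶠ σ : ℝ in 𝓝[>] 0, σ ∈ Set.Ioc (0:ℝ) 1 :=
  Ioc_mem_nhdsGT_of_mem (by norm_num : (0:ℝ) ∈ Set.Ico (0:ℝ) 1)

lemma sqlog_tendsto :
    Tendsto (fun σ : ℝ => σ ^ 2 * Real.log (1 + 16 * π ^ 2 / σ ^ 4)) (𝓝[>] 0) (𝓝 0) := by
  apply squeeze_zero' (g := fun σ : ℝ => 16 * σ)
  · filter_upwards [ev_Ioc] with σ hσ
    exact mul_nonneg (by positivity) (log_pos' hσ.1)
  · filter_upwards [ev_Ioc] with σ hσ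
    have h := log_ub hσ.1 hσ.2
    have h2 : σ ^ 2 * Real.log (1 + 16 * π ^ 2 / σ ^ 4) ≤ σ ^ 2 * (16 / σ) :=
      mul_le_mul_of_nonneg_left h (by positivity)
    have h3 : σ ^ 2 * (16 / σ) = 16 * σ := by
      have hne : σ ≠ 0 := hσ.1.ne'
      field_simp
    linarith
  · have : Tendsto (fun σ : ℝ => 16 * σ) (𝓝 0) (𝓝 0) := by
      simpa using (continuous_mul_left (16:ℝ)).tendsto (0:ℝ)
    exact this.mono_left nhdsWithin_le_nhds

lemma Nf_tendsto : Tendsto Nf (𝓝[>] 0) (𝓝 (π / 2)) := by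
  have hπ := Real.pi_pos
  have hfac : Tendsto (fun σ : ℝ => 1 - σ ^ 4 / (16 * π ^ 2)) (𝓝[>] 0) (𝓝 1) := by
    have : Continuous (fun σ : ℝ => 1 - σ ^ 4 / (16 * π ^ 2)) := by continuity
    have h := this.tendsto (0:ℝ)
    simp only [ne_eq, OfNat.ofNat_ne_zero, not_false_eq_true, zero_pow, zero_div, sub_zero] at h
    norm_num at h
    exact h.mono_left nhdsWithin_le_nhds
  have hsq : Tendsto (fun σ : ℝ => σ ^ 2 / (4 * π)) (𝓝[>] 0) (𝓝 0) := by
    have : Continuous (fun σ : ℝ => σ ^ 2 / (4 * π)) := by continuity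
    have h := this.tendsto (0:ℝ)
    norm_num at h
    exact h.mono_left nhdsWithin_le_nhds
  have hlt : Tendsto (fun σ : ℝ => (σ ^ 2 / (4 * π)) * Real.log (1 + 16 * π ^ 2 / σ ^ 4))
      (𝓝[>] 0) (𝓝 0) := by
    have h := sqlog_tendsto.const_mul (1 / (4 * π))
    rw [mul_zero] at h
    apply h.congr
    intro σ; ring
  have := ((arctan_tendsto.mul hfac).sub hlt).add hsq
  rw [mul_one, sub_zero, add_zero] at this
  exact this

lemma Df_tendsto : Tendsto Df (𝓝[>] 0) (𝓝[>] 0) := by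
  have hπ := Real.pi_pos
  apply tendsto_nhdsWithin_of_tendsto_nhds_of_eventually_within
  · have h1 : Tendsto (fun σ : ℝ => (σ ^ 4 / (16 * π ^ 2))) (𝓝[>] 0) (𝓝 0) := by
      have : Continuous (fun σ : ℝ => σ ^ 4 / (16 * π ^ 2)) := by continuity
      have h := this.tendsto (0:ℝ)
      norm_num at h
      exact h.mono_left nhdsWithin_le_nhds
    have hsq : Tendsto (fun σ : ℝ => σ ^ 2 / (4 * π)) (𝓝[>] 0) (𝓝 0) := by
      have : Continuous (fun σ : ℝ => σ ^ 2 / (4 * π)) := by continuity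
      have h := this.tendsto (0:ℝ)
      norm_num at h
      exact h.mono_left nhdsWithin_le_nhds
    have hlt : Tendsto (fun σ : ℝ => (σ ^ 2 / (8 * π)) * Real.log (1 + 16 * π ^ 2 / σ ^ 4))
        (𝓝[>] 0) (𝓝 0) := by
      have h := sqlog_tendsto.const_mul (1 / (8 * π))
      rw [mul_zero] at h
      apply h.congr
      intro σ; ring
    have := ((h1.mul arctan_tendsto).add hlt).sub hsq
    rw [zero_mul, add_zero, sub_zero] at this
    exact this
  · filter_upwards [ev_Ioc] with σ hσ
    exact Df_pos hσ.1 hσ.2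

lemma SIR_tendsto : Tendsto SIR (𝓝[>] 0) atTop := by
  have h := Filter.Tendsto.pos_mul_atTop (by positivity : (0:ℝ) < π / 2) Nf_tendsto
    (tendsto_inv_nhdsGT_zero.comp Df_tendsto)
  apply h.congr
  intro σ
  rw [SIR_eq, div_eq_mul_inv]
  rfl

end tendsto

section numeric
open Real Filter Topology

lemma rpow_25 : (10 : ℝ) ^ (2.5 : ℝ) < 317 := by
  have h0 : (0:ℝ) ≤ 10 := by norm_num
  have hx : (0:ℝ) ≤ (10 : ℝ) ^ (2.5 : ℝ) := Real.rpow_nonneg h0 _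
  have hsq : ((10 : ℝ) ^ (2.5 : ℝ)) ^ (2:ℕ) = 100000 := by
    rw [← Real.rpow_natCast ((10:ℝ) ^ (2.5:ℝ)) 2, ← Real.rpow_mul h0]
    norm_num
  nlinarith

set_option maxHeartbeats 1000000 in
lemma SIR_numeric : SIR 0.1 > (10 : ℝ) ^ (2.5 : ℝ) := by
  have hπl : 3.141592 < π := Real.pi_gt_d6
  have hπu : π < 3.141593 := Real.pi_lt_d6
  have hπ0 := Real.pi_pos
  -- bounds on A
  have hA2 : Real.arctan (4 * π / (0.1:ℝ) ^ 2) < 1.5708 := by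
    have := Real.arctan_lt_pi_div_two (4 * π / (0.1:ℝ) ^ 2)
    linarith
  have hA1 : 1.5699 < Real.arctan (4 * π / (0.1:ℝ) ^ 2) := by
    have hx : (0:ℝ) < 4 * π / (0.1:ℝ) ^ 2 := by positivity
    have hinv := Real.arctan_inv_of_pos hx
    have harct : Real.arctan (4 * π / (0.1:ℝ) ^ 2)⁻¹ ≤ (4 * π / (0.1:ℝ) ^ 2)⁻¹ :=
      arctan_le_self' (by positivity)
    have hsmall : (4 * π / (0.1:ℝ) ^ 2)⁻¹ < 0.00084 := by
      rw [inv_lt_comm₀ hx (by norm_num)]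
      rw [lt_div_iff₀ (by norm_num)]
      nlinarith
    have h5 : π / 2 - Real.arctan (4 * π / (0.1:ℝ) ^ 2) ≤ (4 * π / (0.1:ℝ) ^ 2)⁻¹ :=
      hinv ▸ harct
    linarith
  -- bounds on L
  have hargl : (1048576:ℝ) < 1 + 16 * π ^ 2 / (0.1:ℝ) ^ 4 := by
    have h : 16 * π ^ 2 / (0.1:ℝ) ^ 4 = 160000 * π ^ 2 := by
      rw [show ((0.1:ℝ)) ^ 4 = 1/10000 by norm_num]
      field_simp
      ring
    rw [h]; nlinarith
  have hargu : 1 + 16 * π ^ 2 / (0.1:ℝ) ^ 4 < 1579139 := by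
    have h : 16 * π ^ 2 / (0.1:ℝ) ^ 4 = 160000 * π ^ 2 := by
      rw [show ((0.1:ℝ)) ^ 4 = 1/10000 by norm_num]
      field_simp
      ring
    rw [h]; nlinarith
  have hlog2l : (0.6931471:ℝ) < Real.log 2 := by linarith [Real.log_two_gt_d9]
  have hlog2u : Real.log 2 < 0.6931472 := by linarith [Real.log_two_lt_d9]
  have hL1 : 13.86 < Real.log (1 + 16 * π ^ 2 / (0.1:ℝ) ^ 4) := by
    have h1 : Real.log 1048576 ≤ Real.log (1 + 16 * π ^ 2 / (0.1:ℝ) ^ 4) :=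
      Real.log_le_log (by norm_num) hargl.le
    have h2 : Real.log 1048576 = 20 * Real.log 2 := by
      rw [show (1048576:ℝ) = 2 ^ (20:ℕ) by norm_num, Real.log_pow]
      norm_num
    linarith
  have hL2 : Real.log (1 + 16 * π ^ 2 / (0.1:ℝ) ^ 4) < 14.277 := by
    have h1 : Real.log (1 + 16 * π ^ 2 / (0.1:ℝ) ^ 4) < Real.log 1579139 :=
      Real.log_lt_log (by positivity) hargu
    have h2 : Real.log 1579139 ≤ Real.log (1048576 * 1.5061) :=
      Real.log_le_log (by norm_num) (by norm_num)
    have h3 : Real.log ((1048576:ℝ) * 1.5061) = 20 * Real.log 2 + Real.log 1.5061 := by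
      rw [Real.log_mul (by norm_num) (by norm_num),
        show (1048576:ℝ) = 2 ^ (20:ℕ) by norm_num, Real.log_pow]
      norm_num
    have h4 : Real.log (1.5061:ℝ) ≤ (Real.log 2 + 0.13416861) / 2 := by
      have ha : Real.log (1.5061:ℝ) = Real.log ((1.5061:ℝ) ^ (2:ℕ)) / 2 := by
        rw [Real.log_pow]; norm_num
      have hb : Real.log ((1.5061:ℝ) ^ (2:ℕ)) ≤ Real.log ((2:ℝ) * 1.13416861) :=
        Real.log_le_log (by norm_num) (by norm_num)
      have hc : Real.log ((2:ℝ) * 1.13416861) = Real.log 2 + Real.log 1.13416861 :=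
        Real.log_mul (by norm_num) (by norm_num)
      have hd : Real.log (1.13416861:ℝ) ≤ 0.13416861 := by
        linarith [Real.log_le_sub_one_of_pos (show (0:ℝ) < 1.13416861 by norm_num)]
      linarith
    linarith
  -- final arithmetic
  have hD01 : 0 < Df 0.1 := Df_pos (by norm_num) (by norm_num)
  have hgoal : 317 * Df 0.1 < Nf 0.1 := by
    have h16 : (0:ℝ) < 16 * π ^ 2 := by positivity
    have e1 : 317 * Df 0.1 * (16 * π ^ 2)
        = 317 * (0.0001 * Real.arctan (4 * π / (0.1:ℝ) ^ 2)
          + 0.02 * π * Real.log (1 + 16 * π ^ 2 / (0.1:ℝ) ^ 4) - 0.04 * π) := by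
      unfold Df; field_simp; ring
    have e2 : Nf 0.1 * (16 * π ^ 2)
        = 16 * π ^ 2 * Real.arctan (4 * π / (0.1:ℝ) ^ 2)
          - 0.0001 * Real.arctan (4 * π / (0.1:ℝ) ^ 2)
          - 0.04 * π * Real.log (1 + 16 * π ^ 2 / (0.1:ℝ) ^ 4) + 0.04 * π := by
      unfold Nf; field_simp; ring
    have key : 317 * Df 0.1 * (16 * π ^ 2) < Nf 0.1 * (16 * π ^ 2) := by
      rw [e1, e2]
      have hπ2 : (9.8696:ℝ) < π ^ 2 := by nlinarith
      have hPA : (15.4942:ℝ) < π ^ 2 * Real.arctan (4 * π / (0.1:ℝ) ^ 2) := by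
        nlinarith
      have hPL : π * Real.log (1 + 16 * π ^ 2 / (0.1:ℝ) ^ 4) < 44.853 := by
        nlinarith
      nlinarith [hPA, hPL, hA2, hπl]
    exact lt_of_mul_lt_mul_right key h16.le
  have hfin := (lt_div_iff₀ hD01).mpr hgoal
  rw [SIR_eq]
  calc (10:ℝ) ^ (2.5:ℝ) < 317 := rpow_25
    _ < Nf 0.1 / Df 0.1 := hfin

end numeric

/-- `SIR(σ) → ∞` as `σ → 0⁺`, `SIR` is decreasing for small `σ`, and
`SIR(0.1) > 10^{2.5}` (i.e., the SIR exceeds 25 dB when `σ < 0.1`). -/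
theorem SIR_properties :
    Tendsto SIR (nhdsWithin 0 (Set.Ioi 0)) atTop ∧
    (∃ ε : ℝ, 0 < ε ∧ StrictAntiOn SIR (Set.Ioo 0 ε)) ∧
    SIR 0.1 > (10 : ℝ) ^ (2.5 : ℝ) := by
  refine ⟨SIR_tendsto, ⟨1/2, by norm_num, strictAnti_SIR⟩, SIR_numeric⟩
end

section
/- For L > 0 and T > 0, the in-band power of the free-running phasor received-signal spectrum is P = (T/π)∫_{-1/(2T)}^{1/(2T)} [arctan((f + 1/(2T))/(πL)) − arctan((f − 1/(2T))/(πL))] df = (2/π)·[arctan(1/ρ) − (ρ/2)·log(1 + 1/ρ²)], where ρ = πLT. -/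
open Real MeasureTheory intervalIntegral

lemma aux_hasDerivAt (b : ℝ) (hb : 0 < b) (x : ℝ) :
    HasDerivAt (fun x : ℝ => x * Real.arctan (x / b) - (b / 2) * Real.log (b ^ 2 + x ^ 2))
      (Real.arctan (x / b)) x := by
  have hb2 : (0:ℝ) < b ^ 2 + x ^ 2 := by positivity
  have h1 : HasDerivAt (fun x : ℝ => Real.arctan (x / b))
      ((1 / (1 + (x / b) ^ 2)) * (1 / b)) x :=
    ((hasDerivAt_id' x).div_const b).arctan
  have h2 : HasDerivAt (fun x : ℝ => x * Real.arctan (x / b))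
      (1 * Real.arctan (x / b) + x * ((1 / (1 + (x / b) ^ 2)) * (1 / b))) x :=
    (hasDerivAt_id x).mul h1
  have h3 : HasDerivAt (fun x : ℝ => b ^ 2 + x ^ 2) (0 + 2 * x ^ 1) x :=
    (hasDerivAt_const x (b ^ 2)).add (hasDerivAt_pow 2 x)
  have h4 : HasDerivAt (fun x : ℝ => Real.log (b ^ 2 + x ^ 2))
      ((0 + 2 * x ^ 1) / (b ^ 2 + x ^ 2)) x := h3.log hb2.ne'
  have := h2.sub ((h4.const_mul (b / 2)))
  refine this.congr_deriv ?_
  have hb' := hb.ne'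
  field_simp
  ring

/-- The in-band power of the free-running phasor received-signal spectrum:
`(T/π)∫_{-1/(2T)}^{1/(2T)} [arctan((f+1/(2T))/(πL)) − arctan((f−1/(2T))/(πL))] df
= (2/π)[arctan(1/ρ) − (ρ/2)log(1+1/ρ²)]` with `ρ = πLT`. -/
theorem inband_power (L T : ℝ) (hL : 0 < L) (hT : 0 < T) :
    (T / π) * ∫ f in (-(1 / (2 * T)))..(1 / (2 * T)),
        (Real.arctan ((f + 1 / (2 * T)) / (π * L))
          - Real.arctan ((f - 1 / (2 * T)) / (π * L)))
      = (2 / π) * (Real.arctan (1 / (π * L * T))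
          - (π * L * T / 2) * Real.log (1 + 1 / (π * L * T) ^ 2)) := by
  set a : ℝ := 1 / (2 * T) with ha
  set b : ℝ := π * L with hbdef
  have hb : 0 < b := by positivity
  have ha0 : 0 < a := by positivity
  set G : ℝ → ℝ := fun x => x * Real.arctan (x / b) - (b / 2) * Real.log (b ^ 2 + x ^ 2) with hG
  have key : ∀ x ∈ Set.uIcc (-a) a,
      HasDerivAt (fun f => G (f + a) - G (f - a))
        (Real.arctan ((x + a) / b) - Real.arctan ((x - a) / b)) x := by
    intro x _
    have h1 : HasDerivAt (fun f : ℝ => G (f + a)) (Real.arctan ((x + a) / b)) x := by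
      have := (aux_hasDerivAt b hb (x + a)).comp x ((hasDerivAt_id' x).add_const a)
      exact this.congr_deriv (by simp)
    have h2 : HasDerivAt (fun f : ℝ => G (f - a)) (Real.arctan ((x - a) / b)) x := by
      have := (aux_hasDerivAt b hb (x - a)).comp x ((hasDerivAt_id' x).sub_const a)
      exact this.congr_deriv (by simp)
    exact h1.sub h2
  have hcont : IntervalIntegrable
      (fun f => Real.arctan ((f + a) / b) - Real.arctan ((f - a) / b))
      MeasureTheory.volume (-a) a := by
    apply Continuous.intervalIntegrable
    continuity
  have hint := intervalIntegral.integral_eq_sub_of_hasDerivAt key hcont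
  rw [hint]
  have habne : a + a ≠ 0 := by positivity
  have hGval : (G (a + a) - G (a - a)) - (G (-a + a) - G (-a - a))
      = 2 * (2 * a) * Real.arctan (2 * a / b) - b * Real.log (1 + (2 * a / b) ^ 2) := by
    have e1 : a + a = 2 * a := by ring
    have e2 : a - a = 0 := by ring
    have e3 : -a + a = 0 := by ring
    have e4 : -a - a = -(2 * a) := by ring
    rw [e1, e2, e3, e4]
    simp only [hG]
    have hlogs : Real.log (b ^ 2 + (2 * a) ^ 2) - Real.log (b ^ 2 + 0 ^ 2)
        = Real.log (1 + (2 * a / b) ^ 2) := by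
      rw [← Real.log_div (by positivity) (by positivity)]
      congr 1
      field_simp
      simp
    have harctan : Real.arctan (-(2 * a) / b) = - Real.arctan (2 * a / b) := by
      rw [neg_div, Real.arctan_neg]
    rw [harctan]
    have h0 : ((0:ℝ)) * Real.arctan (0 / b) = 0 := by simp
    have : Real.log (b ^ 2 + (-(2 * a)) ^ 2) = Real.log (b ^ 2 + (2 * a) ^ 2) := by ring_nf
    rw [this]
    linear_combination (-b) * hlogs
  rw [hGval]
  have h2a : 2 * a = 1 / T := by rw [ha]; field_simp
  rw [h2a]
  have e5 : 1 / T / b = 1 / (π * L * T) := by rw [hbdef]; field_simp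
  rw [e5]
  have e6 : (1 / (π * L * T)) ^ 2 = 1 / (π * L * T) ^ 2 := by rw [div_pow]; simp
  rw [e6]
  have hπ : (0:ℝ) < π := Real.pi_pos
  rw [hbdef]
  field_simp
end
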